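/- arXiv:1107.3592 — 3 statements merged into one kernel-verified Lean document; each statement's English description precedes it below -/
import Mathlib

section
/- If M : [0,T) → ℝ^{d×d} is a differentiable solution of the closed Doi equation dM/dt = κM + Mκᵀ - (2/tr M)(κ:M)M + 4N(2M² - (2/tr M)(M:M)M) + 2Id - (2d/tr M)M, and M(t) is symmetric for all t with tr(M(t)) > 0, then d/dt tr(M(t)) = 0 for all t. -/
open Matrix

/-- Right-hand side of the closed Doi equation; `∑ i, ∑ j, κ i j * A i j` is the Frobenius
product `κ : A`. -/
noncomputable def doiField {d : ℕ} (κ : Matrix (Fin d) (Fin d) ℝ) (N : ℝ)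
    (A : Matrix (Fin d) (Fin d) ℝ) : Matrix (Fin d) (Fin d) ℝ :=
  κ * A + A * κᵀ
    - ((2 / A.trace) * ∑ i, ∑ j, κ i j * A i j) • A
    + (4 * N) • ((2 : ℝ) • (A * A) - ((2 / A.trace) * ∑ i, ∑ j, A i j * A i j) • A)
    + (2 : ℝ) • (1 : Matrix (Fin d) (Fin d) ℝ)
    - ((2 * d) / A.trace) • A

theorem Matrix.hasDerivAt_trace {𝕜 : Type*} [NontriviallyNormedField 𝕜] {n : Type*} [Fintype n]
    {M : 𝕜 → Matrix n n 𝕜} {X : Matrix n n 𝕜} {t : 𝕜}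
    (h : ∀ i, HasDerivAt (fun s => M s i i) (X i i) t) :
    HasDerivAt (fun s => (M s).trace) X.trace t :=
  HasDerivAt.fun_sum fun i _ => h i

theorem Matrix.sum_mul_apply_eq_trace_mul_of_transpose_eq {n R : Type*} [Fintype n]
    [CommSemiring R] (B A : Matrix n n R) (hA : Aᵀ = A) :
    ∑ i, ∑ j, B i j * A i j = (B * A).trace := by
  simpa only [hA, hadamard_apply] using sum_hadamard_eq B A

/-- For symmetric `A`, `tr (κ A + A κᵀ) = 2 κ : A`, `tr (A²) = A : A` and `tr (2 Id) = 2 d`, so each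
term of the field cancels against its `2 / tr A`-normalised companion. -/
theorem trace_doiField {d : ℕ} (κ : Matrix (Fin d) (Fin d) ℝ) (N : ℝ)
    {A : Matrix (Fin d) (Fin d) ℝ} (hA : Aᵀ = A) (hc : A.trace ≠ 0) :
    (doiField κ N A).trace = 0 := by
  have hκA : (A * κᵀ).trace = (κ * A).trace := by
    rw [← trace_transpose, transpose_mul, transpose_transpose, hA]
  simp only [doiField, trace_add, trace_sub, trace_smul, trace_one, Fintype.card_fin, smul_eq_mul,
    sum_mul_apply_eq_trace_mul_of_transpose_eq _ A hA, hκA]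
  field_simp
  ring

/-- Along a symmetric solution with positive trace of the closed Doi equation,
the trace is conserved: `d/dt tr(M(t)) = 0`. -/
theorem stmt_4 {d : ℕ} (κ : Matrix (Fin d) (Fin d) ℝ) (N T : ℝ)
    (M : ℝ → Matrix (Fin d) (Fin d) ℝ)
    (hM : ∀ t ∈ Set.Ico (0:ℝ) T, ∀ i j,
      HasDerivAt (fun s => M s i j)
        ((κ * M t + M t * (κ.transpose)
          - ((2 / (M t).trace) * ∑ i', ∑ j', κ i' j' * M t i' j') • M t
          + (4 * N) • ((2:ℝ) • (M t * M t)
              - ((2 / (M t).trace) * ∑ i', ∑ j', M t i' j' * M t i' j') • M t)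
          + (2:ℝ) • (1 : Matrix (Fin d) (Fin d) ℝ)
          - ((2 * d) / (M t).trace) • M t) i j) t)
    (hsym : ∀ t ∈ Set.Ico (0:ℝ) T, (M t).transpose = M t)
    (htr : ∀ t ∈ Set.Ico (0:ℝ) T, 0 < (M t).trace) :
    ∀ t ∈ Set.Ico (0:ℝ) T, HasDerivAt (fun s => (M s).trace) 0 t := by
  intro t ht
  rw [← trace_doiField κ N (hsym t ht) (htr t ht).ne']
  exact hasDerivAt_trace fun i => hM t ht i i
end

section
/- In dimension d = 2, writing Q = M - Id/2 = [[x, y],[y, -x]] with tr(M)=1, the Doi closure equation dM/dt = κM + Mκᵀ - 2(κ:M)M + 8N(M² - (M:M)M) + 4(Id/2 - M) with κ = (Pe/2)[[0, a+1],[a-1, 0]] is equivalent to the planar system dx/dt = -4x(1 - N + 4N(x²+y²)) + Pe·y(1 - 2ax), dy/dt = -4y(1 - N + 4N(x²+y²)) + Pe(-x + a/2 - 2ay²). -/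
open Matrix

def frobeniusInner {n : Type*} [Fintype n] (A B : Matrix n n ℝ) : ℝ :=
  ∑ i, ∑ j, A i j * B i j

noncomputable def doiClosureField {n : Type*} [Fintype n] [DecidableEq n] (κ : Matrix n n ℝ) (N : ℝ)
    (M : Matrix n n ℝ) : Matrix n n ℝ :=
  κ * M + M * κᵀ - (2 * frobeniusInner κ M) • M
    + (8 * N) • (M * M - frobeniusInner M M • M) + (4 : ℝ) • ((1 / 2 : ℝ) • 1 - M)

theorem doiClosureField_planar (Pe a N x y : ℝ) :
    doiClosureField ((Pe / 2) • !![0, a + 1; a - 1, 0]) N !![1/2 + x, y; y, 1/2 - x] =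
      !![-4 * x * (1 - N + 4 * N * (x ^ 2 + y ^ 2)) + Pe * y * (1 - 2 * a * x),
          -4 * y * (1 - N + 4 * N * (x ^ 2 + y ^ 2)) + Pe * (-x + a / 2 - 2 * a * y ^ 2);
        -4 * y * (1 - N + 4 * N * (x ^ 2 + y ^ 2)) + Pe * (-x + a / 2 - 2 * a * y ^ 2),
          -(-4 * x * (1 - N + 4 * N * (x ^ 2 + y ^ 2)) + Pe * y * (1 - 2 * a * x))] := by
  ext i j
  fin_cases i <;> fin_cases j <;>
    simp only [doiClosureField, frobeniusInner, Fin.zero_eta, Fin.mk_one, mul_apply,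
      Fin.sum_univ_two, Matrix.smul_apply, one_apply, Matrix.sub_apply, Matrix.add_apply,
      transpose_apply, cons_val', cons_val_zero, cons_val_one, empty_val', cons_val_fin_one,
      of_apply, smul_eq_mul] <;> norm_num <;> ring

theorem hasDerivAt_symmetric_entries_iff {c u v t : ℝ} {x y : ℝ → ℝ} :
    (∀ i j, HasDerivAt (fun s => !![c + x s, y s; y s, c - x s] i j) (!![u, v; v, -u] i j) t)
      ↔ HasDerivAt x u t ∧ HasDerivAt y v t := by
  simp only [Fin.forall_fin_two, of_apply, cons_val', cons_val_zero, cons_val_one,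
    empty_val', cons_val_fin_one]
  constructor
  · rintro ⟨⟨hx, hy⟩, -, -⟩
    exact ⟨(hasDerivAt_const_add_iff c).mp hx, hy⟩
  · rintro ⟨hx, hy⟩
    exact ⟨⟨hx.const_add c, hy⟩, hy, by simpa using hx.const_sub c⟩

/-- In dimension 2, with `M = Id/2 + [[x,y],[y,-x]]` of trace one, the Doi closure ODE
is equivalent to the planar system on `(x,y)`. -/
theorem stmt_6 (Pe a N : ℝ) (x y : ℝ → ℝ) (t : ℝ)
    (κ : Matrix (Fin 2) (Fin 2) ℝ) (hκ : κ = (Pe / 2) • !![0, a + 1; a - 1, 0])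
    (M : ℝ → Matrix (Fin 2) (Fin 2) ℝ)
    (hM : ∀ s, M s = !![1/2 + x s, y s; y s, 1/2 - x s]) :
    (∀ i j, HasDerivAt (fun s => M s i j)
        ((κ * M t + M t * κ.transpose
          - ((2:ℝ) * ∑ i', ∑ j', κ i' j' * M t i' j') • M t
          + (8 * N) • (M t * M t - (∑ i', ∑ j', M t i' j' * M t i' j') • M t)
          + (4:ℝ) • ((1/2 : ℝ) • (1 : Matrix (Fin 2) (Fin 2) ℝ) - M t)) i j) t)
    ↔ (HasDerivAt x
          (-4 * x t * (1 - N + 4 * N * (x t ^ 2 + y t ^ 2))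
            + Pe * y t * (1 - 2 * a * x t)) t
        ∧ HasDerivAt y
          (-4 * y t * (1 - N + 4 * N * (x t ^ 2 + y t ^ 2))
            + Pe * (-(x t) + a / 2 - 2 * a * y t ^ 2)) t) := by
  subst hκ
  obtain rfl : M = fun s => !![1/2 + x s, y s; y s, 1/2 - x s] := funext hM
  change (∀ i j, HasDerivAt _ (doiClosureField _ N !![1/2 + x t, y t; y t, 1/2 - x t] i j) t) ↔ _
  rw [doiClosureField_planar]
  exact hasDerivAt_symmetric_entries_iff
end

section
/- Let Y¹,…,Y^I be i.i.d. square-integrable random vectors in ℝ^d with E‖Y¹‖² = L² > 0 and E‖Y¹‖⁴ < ∞, and define Z^i = Y^i (L (I⁻¹ Σ_j ‖Y^j‖²)^{-1/2} - 1) (on the event Σ_j ‖Y^j‖² > 0). Then E‖Z^i‖² ≤ (1/(I L²)) Var(‖Y¹‖²). -/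
/-!
Write `X_k = ‖Y^k‖²` and `S = I⁻¹ Σ_k X_k`. Since the `X_k` are exchangeable,
`E[(L/√S - 1)² X_i]` does not depend on `i`, so it equals `E[(L/√S - 1)² S]`.
Pointwise `(L/√S - 1)² S = (L - √S)² = (L² - S)²/(L + √S)² ≤ (S - L²)²/L²`,
and `E[(S - L²)²] = Var S = Var(X_1)/I`.
-/

open MeasureTheory ProbabilityTheory Finset

lemma sq_div_sqrt_sub_one_mul_le {L s : ℝ} (hL : 0 < L) (hs : 0 ≤ s) :
    (L / √s - 1) ^ 2 * s ≤ (s - L ^ 2) ^ 2 / L ^ 2 := by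
  obtain ⟨t, ht, rfl⟩ : ∃ t, 0 ≤ t ∧ s = t ^ 2 := ⟨√s, Real.sqrt_nonneg s, (Real.sq_sqrt hs).symm⟩
  rw [Real.sqrt_sq ht]
  obtain rfl | ht := ht.eq_or_lt
  · simp only [ne_eq, OfNat.ofNat_ne_zero, not_false_eq_true, zero_pow, mul_zero]
    positivity
  calc (L / t - 1) ^ 2 * t ^ 2 = (t ^ 2 - L ^ 2) ^ 2 / (L + t) ^ 2 := by
        field_simp
        ring
    _ ≤ (t ^ 2 - L ^ 2) ^ 2 / L ^ 2 := by gcongr; linarith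

namespace ProbabilityTheory

variable {Ω : Type*} [MeasurableSpace Ω] {μ : Measure Ω}

lemma iIndepFun.identDistrib_comp_perm {ι β : Type*} [Countable ι] [MeasurableSpace β]
    {X : ι → Ω → β} (hX : iIndepFun X μ) (hid : ∀ i j, IdentDistrib (X i) (X j) μ μ)
    (σ : Equiv.Perm ι) :
    IdentDistrib (fun ω i ↦ X (σ i) ω) (fun ω i ↦ X i ω) μ μ :=
  IdentDistrib.pi (fun i ↦ hid (σ i) i) (hX.precomp σ.injective) hX

variable {n : ℕ} {X : Fin n → Ω → ℝ}

lemma iIndepFun.integral_comp_sum_mul_eq (hX : iIndepFun X μ)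
    (hid : ∀ i j, IdentDistrib (X i) (X j) μ μ) {g : ℝ → ℝ} (hg : Measurable g) (i k : Fin n) :
    ∫ ω, g (∑ j, X j ω) * X k ω ∂μ = ∫ ω, g (∑ j, X j ω) * X i ω ∂μ := by
  have hF : Measurable fun x : Fin n → ℝ ↦ g (∑ j, x j) * x i := by fun_prop
  have h := ((hX.identDistrib_comp_perm hid (Equiv.swap i k)).comp hF).integral_eq
  simp only [Function.comp_def, Equiv.swap_apply_left] at h
  have hsum (ω : Ω) : ∑ j, X (Equiv.swap i k j) ω = ∑ j, X j ω :=
    Equiv.sum_comp (Equiv.swap i k) (X · ω)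
  simpa only [hsum] using h

lemma iIndepFun.integral_comp_sum_mul_sum (hX : iIndepFun X μ)
    (hid : ∀ i j, IdentDistrib (X i) (X j) μ μ) {g : ℝ → ℝ} (hg : Measurable g)
    (hint : ∀ k, Integrable (fun ω ↦ g (∑ j, X j ω) * X k ω) μ) (i : Fin n) :
    ∫ ω, g (∑ j, X j ω) * ∑ k, X k ω ∂μ = n * ∫ ω, g (∑ j, X j ω) * X i ω ∂μ := by
  simp_rw [mul_sum]
  rw [integral_finsetSum _ fun k _ ↦ hint k]
  simp [hX.integral_comp_sum_mul_eq hid hg i]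

lemma iIndepFun.variance_mean (hX : iIndepFun X μ) (hid : ∀ i j, IdentDistrib (X i) (X j) μ μ)
    (hX2 : ∀ k, MemLp (X k) 2 μ) (j : Fin n) :
    Var[fun ω ↦ (n : ℝ)⁻¹ * ∑ k, X k ω; μ] = (n : ℝ)⁻¹ * Var[X j; μ] := by
  have hsum : Var[∑ k, X k; μ] = ∑ k, Var[X k; μ] :=
    IndepFun.variance_sum (fun k _ ↦ hX2 k) fun k _ l _ hkl ↦ hX.indepFun hkl
  have hn : (n : ℝ) ≠ 0 := Nat.cast_ne_zero.2 j.pos.ne'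
  simp only [← Finset.sum_apply] at hsum ⊢
  rw [variance_const_mul, hsum]
  simp [fun k ↦ (hid k j).variance_eq]
  field_simp

theorem iIndepFun.integral_sq_div_sqrt_mean_sub_one_mul_le [IsProbabilityMeasure μ]
    (hX : iIndepFun X μ) (hid : ∀ i j, IdentDistrib (X i) (X j) μ μ)
    (hnn : ∀ k ω, 0 ≤ X k ω) (hX2 : ∀ k, MemLp (X k) 2 μ) {L : ℝ} (hL : 0 < L)
    (hmean : ∀ k, μ[X k] = L ^ 2) (i j : Fin n) :
    ∫ ω, (L / √((n : ℝ)⁻¹ * ∑ k, X k ω) - 1) ^ 2 * X i ω ∂μ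
      ≤ 1 / (n * L ^ 2) * ∫ ω, (X j ω - L ^ 2) ^ 2 ∂μ := by
  have hn : (n : ℝ) ≠ 0 := Nat.cast_ne_zero.2 i.pos.ne'
  set S : Ω → ℝ := fun ω ↦ (n : ℝ)⁻¹ * ∑ k, X k ω with hS
  set g : ℝ → ℝ := fun s ↦ (L / √((n : ℝ)⁻¹ * s) - 1) ^ 2
  have hgm : Measurable g := by fun_prop
  have hS2 : MemLp S 2 μ := (memLp_finsetSum univ fun k _ ↦ hX2 k).const_mul _
  have hSmean : μ[S] = L ^ 2 := by
    rw [integral_const_mul, integral_finsetSum _ fun k _ ↦ (hX2 k).integrable one_le_two]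
    simp [hmean, hn]
  have hvar : ∫ ω, (S ω - L ^ 2) ^ 2 ∂μ = (n : ℝ)⁻¹ * ∫ ω, (X j ω - L ^ 2) ^ 2 ∂μ := by
    have h : Var[S; μ] = (n : ℝ)⁻¹ * Var[X j; μ] := hX.variance_mean hid hX2 j
    rwa [variance_eq_integral hS2.aemeasurable, variance_eq_integral (hX2 j).aemeasurable,
      hSmean, hmean j] at h
  have hDint : Integrable (fun ω ↦ (S ω - L ^ 2) ^ 2 / L ^ 2) μ :=
    (hS2.sub (memLp_const _)).integrable_sq.div_const _
  have hbound (ω : Ω) : g (∑ k, X k ω) * ∑ k, X k ω ≤ n * ((S ω - L ^ 2) ^ 2 / L ^ 2) := by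
    have hSnn : 0 ≤ S ω := mul_nonneg (by positivity) (sum_nonneg fun k _ ↦ hnn k ω)
    calc g (∑ k, X k ω) * ∑ k, X k ω = n * (g (∑ k, X k ω) * S ω) := by
          simp only [hS]; field_simp
      _ ≤ _ := by gcongr; exact sq_div_sqrt_sub_one_mul_le hL hSnn
  have hint (k : Fin n) : Integrable (fun ω ↦ g (∑ j, X j ω) * X k ω) μ := by
    have hXm k := (hX2 k).aemeasurable
    refine (hDint.const_mul n).mono' (by fun_prop) (ae_of_all _ fun ω ↦ ?_)
    rw [Real.norm_of_nonneg (mul_nonneg (sq_nonneg _) (hnn k ω))]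
    exact (mul_le_mul_of_nonneg_left (single_le_sum (fun j _ ↦ hnn j ω) (mem_univ k))
      (sq_nonneg _)).trans (hbound ω)
  show ∫ ω, g (∑ k, X k ω) * X i ω ∂μ ≤ _
  calc ∫ ω, g (∑ k, X k ω) * X i ω ∂μ = (n : ℝ)⁻¹ * ∫ ω, g (∑ k, X k ω) * ∑ k, X k ω ∂μ := by
        rw [hX.integral_comp_sum_mul_sum hid hgm hint i]
        field_simp
    _ ≤ (n : ℝ)⁻¹ * ∫ ω, n * ((S ω - L ^ 2) ^ 2 / L ^ 2) ∂μ := by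
        refine mul_le_mul_of_nonneg_left ?_ (by positivity)
        refine integral_mono_of_nonneg (ae_of_all _ fun ω ↦ ?_) (hDint.const_mul n)
          (ae_of_all _ hbound)
        exact mul_nonneg (sq_nonneg _) (sum_nonneg fun k _ ↦ hnn k ω)
    _ = 1 / (n * L ^ 2) * ∫ ω, (X j ω - L ^ 2) ^ 2 ∂μ := by
        rw [integral_const_mul, integral_div, hvar]
        field_simp

end ProbabilityTheory

theorem stmt_19_general {Ω : Type*} [MeasurableSpace Ω] (μ : Measure Ω)
    [IsProbabilityMeasure μ] (d I : ℕ) (L : ℝ) (hL : 0 < L)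
    (Y : Fin I → Ω → EuclideanSpace ℝ (Fin d))
    (hindep : iIndepFun Y μ)
    (hid : ∀ j k, IdentDistrib (Y j) (Y k) μ μ)
    (hL2 : ∀ j, ∫ ω, ‖Y j ω‖ ^ 2 ∂μ = L ^ 2)
    (hmom4 : ∀ j, Integrable (fun ω => ‖Y j ω‖ ^ 4) μ)
    (Z : Fin I → Ω → EuclideanSpace ℝ (Fin d))
    (hZ : ∀ i ω, Z i ω
      = (L / Real.sqrt ((I : ℝ)⁻¹ * ∑ j, ‖Y j ω‖ ^ 2) - 1) • Y i ω) :
    ∀ (i j₀ : Fin I),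
      ∫ ω, ‖Z i ω‖ ^ 2 ∂μ
        ≤ (1 / ((I : ℝ) * L ^ 2)) * ∫ ω, (‖Y j₀ ω‖ ^ 2 - L ^ 2) ^ 2 ∂μ := by
  intro i j₀
  have hX2 (k : Fin I) : MemLp (fun ω ↦ ‖Y k ω‖ ^ 2) 2 μ := by
    refine (memLp_two_iff_integrable_sq ?_).2 ?_
    · exact ((hid k k).aemeasurable_fst.norm.pow_const 2).aestronglyMeasurable
    · simpa only [← pow_mul] using hmom4 k
  have hnormZ (ω : Ω) : ‖Z i ω‖ ^ 2
      = (L / √((I : ℝ)⁻¹ * ∑ k, ‖Y k ω‖ ^ 2) - 1) ^ 2 * ‖Y i ω‖ ^ 2 := by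
    rw [hZ, norm_smul, mul_pow, Real.norm_eq_abs, sq_abs]
  simp only [hnormZ]
  exact iIndepFun.integral_sq_div_sqrt_mean_sub_one_mul_le
    (hindep.comp (fun _ v ↦ ‖v‖ ^ 2) fun _ ↦ by fun_prop)
    (fun k l ↦ (hid k l).comp (by fun_prop)) (fun k ω ↦ sq_nonneg _) hX2 hL hL2 i j₀

/-- Initial coupling error bound: for i.i.d. `Y^j` with `E‖Y¹‖² = L²`, the renormalized
differences `Z^i = (L(I⁻¹Σ‖Y^j‖²)^{-1/2} - 1) Y^i` satisfy
`E‖Z^i‖² ≤ Var(‖Y¹‖²)/(I L²)`. -/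
theorem stmt_19 {Ω : Type*} [MeasurableSpace Ω] (μ : Measure Ω)
    [IsProbabilityMeasure μ] (d I : ℕ) (hI : 0 < I) (L : ℝ) (hL : 0 < L)
    (Y : Fin I → Ω → EuclideanSpace ℝ (Fin d))
    (hmeas : ∀ j, Measurable (Y j))
    (hindep : iIndepFun Y μ)
    (hid : ∀ j k, IdentDistrib (Y j) (Y k) μ μ)
    (hL2 : ∀ j, ∫ ω, ‖Y j ω‖ ^ 2 ∂μ = L ^ 2)
    (hmom4 : ∀ j, Integrable (fun ω => ‖Y j ω‖ ^ 4) μ)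
    (Z : Fin I → Ω → EuclideanSpace ℝ (Fin d))
    (hZ : ∀ i ω, Z i ω
      = (L / Real.sqrt ((I : ℝ)⁻¹ * ∑ j, ‖Y j ω‖ ^ 2) - 1) • Y i ω) :
    ∀ (i j₀ : Fin I),
      ∫ ω, ‖Z i ω‖ ^ 2 ∂μ
        ≤ (1 / ((I : ℝ) * L ^ 2)) * ∫ ω, (‖Y j₀ ω‖ ^ 2 - L ^ 2) ^ 2 ∂μ :=
  stmt_19_general μ d I L hL Y hindep hid hL2 hmom4 Z hZ
end
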